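/- Let d ≥ 3 and g₀(x) = (1+|x|²)^{-(d-1)/2} on ℝ^d. Then equality holds in the p = (d+1)/(d−1) Gagliardo-Nirenberg-Sobolev inequality at g₀: C_S·(d(d-2)/(d-1)²)·‖∇g₀‖₂²·‖g₀‖_{2d/(d-1)}^{4/(d-1)} = ‖g₀‖_{2(d+1)/(d-1)}^{2(d+1)/(d-1)}, where C_S = (4/(d(d-2)))|S^d|^{-2/d} and |S^d| is the surface measure of the unit sphere in ℝ^{d+1}. -/

import Mathlib

open MeasureTheory Real
open scoped ENNReal

noncomputable section

/-- Euclidean space `ℝ^d`. -/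
abbrev E (d : ℕ) := EuclideanSpace ℝ (Fin d)

/-- The sharp constant `C_S = (4/(d(d-2))) |S^d|^{-2/d}`, where
`|S^d| = 2 π^{(d+1)/2} / Γ((d+1)/2)` is the surface measure of the unit sphere
in `ℝ^{d+1}`. -/
def CS (d : ℕ) : ℝ :=
  (4 / ((d : ℝ) * ((d : ℝ) - 2))) *
    (2 * Real.pi ^ (((d : ℝ) + 1) / 2) / Real.Gamma (((d : ℝ) + 1) / 2)) ^
      (-(2 : ℝ) / (d : ℝ))

/-!
Everything reduces to the integrals `J(s) = ∫ (1 + |x|²)^(-s) dx = π^(d/2) Γ(s - d/2) / Γ(s)`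
(`s > d/2`), obtained by writing `(1 + |x|²)^(-s)` as a Gamma integral in an auxiliary variable
`t` and integrating the resulting Gaussian in `x` first. Since
`|∇g₀|² = (d-1)² |x|² (1 + |x|²)^(-(d+1))` and `|x|² = (1 + |x|²) - 1`, we get
`‖∇g₀‖₂² = (d-1)² (J(d) - J(d+1))`, while `g₀^(2d/(d-1))` and `g₀^(2(d+1)/(d-1))` are
`(1 + |x|²)^(-d)` and `(1 + |x|²)^(-(d+1))`. The functional equation of `Γ` gives
`J(d+1) = J(d)/2` and Legendre's duplication formula gives `J(d) = 2^(-d) |S^d|`; with these both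
sides equal `J(d)/2`.
-/

open Set Module

lemma Real.lintegral_rpow_mul_exp_neg_mul_Ioi {a r : ℝ} (ha : 0 < a) (hr : 0 < r) :
    ∫⁻ t in Ioi (0 : ℝ), ENNReal.ofReal (t ^ (a - 1) * rexp (-(r * t)))
      = ENNReal.ofReal ((1 / r) ^ a * Gamma a) := by
  have hint : IntegrableOn (fun t : ℝ => t ^ (a - 1) * rexp (-(r * t))) (Ioi 0) := by
    simpa using integrableOn_rpow_mul_exp_neg_mul_rpow (p := 1) (by linarith) one_pos hr
  rw [← integral_rpow_mul_exp_neg_mul_Ioi ha hr, ofReal_integral_eq_lintegral_ofReal hint]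
  filter_upwards [ae_restrict_mem measurableSet_Ioi] with t (ht : 0 < t)
  positivity

lemma toReal_eLpNorm_ofReal_rpow {α F : Type*} [MeasurableSpace α] {μ : Measure α}
    [NormedAddCommGroup F] {f : α → F} {q : ℝ} (hq : 0 < q) (hf : AEStronglyMeasurable f μ)
    (hint : Integrable (fun x => ‖f x‖ ^ q) μ) :
    (eLpNorm f (ENNReal.ofReal q) μ).toReal ^ q = ∫ x, ‖f x‖ ^ q ∂μ := by
  have hq0 : ENNReal.ofReal q ≠ 0 := by simpa using hq
  have hmem : MemLp f (ENNReal.ofReal q) μ :=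
    (integrable_norm_rpow_iff hf hq0 ENNReal.ofReal_ne_top).1
      (by rwa [ENNReal.toReal_ofReal hq.le])
  rw [hmem.eLpNorm_eq_integral_rpow_norm hq0 ENNReal.ofReal_ne_top, ENNReal.toReal_ofReal hq.le,
    ENNReal.toReal_ofReal (by positivity), ← rpow_mul (integral_nonneg fun x => by positivity),
    inv_mul_cancel₀ hq.ne', rpow_one]

lemma norm_fderiv_one_add_norm_sq_rpow {V : Type*} [NormedAddCommGroup V] [InnerProductSpace ℝ V]
    (p : ℝ) (x : V) :
    ‖fderiv ℝ (fun x : V => (1 + ‖x‖ ^ 2) ^ p) x‖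
      = 2 * |p| * ‖x‖ * (1 + ‖x‖ ^ 2) ^ (p - 1) := by
  have hr : 0 < 1 + ‖x‖ ^ 2 := by positivity
  have hderiv := ((hasStrictFDerivAt_norm_sq x).hasFDerivAt.const_add 1).rpow_const (p := p)
    (Or.inl hr.ne')
  rw [hderiv.fderiv, norm_smul, RCLike.norm_nsmul ℝ, innerSL_apply_norm, norm_mul, norm_eq_abs,
    norm_of_nonneg (by positivity)]
  ring

section

variable {V : Type*} [NormedAddCommGroup V] [InnerProductSpace ℝ V] [FiniteDimensional ℝ V]
  [MeasurableSpace V] [BorelSpace V]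

lemma lintegral_exp_neg_mul_norm_sq {t : ℝ} (ht : 0 < t) :
    ∫⁻ x : V, ENNReal.ofReal (rexp (-(t * ‖x‖ ^ 2)))
      = ENNReal.ofReal ((π / t) ^ ((finrank ℝ V : ℝ) / 2)) := by
  have hval := GaussianFourier.integral_rexp_neg_mul_sq_norm (V := V) ht
  simp only [neg_mul] at hval
  have hint : Integrable fun x : V => rexp (-(t * ‖x‖ ^ 2)) :=
    .of_integral_ne_zero (by rw [hval]; positivity)
  rw [← hval, ofReal_integral_eq_lintegral_ofReal hint (.of_forall fun x => by positivity)]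

lemma lintegral_one_add_norm_sq_rpow_neg {s : ℝ} (hs : (finrank ℝ V : ℝ) / 2 < s) :
    ∫⁻ x : V, ENNReal.ofReal ((1 + ‖x‖ ^ 2) ^ (-s))
      = ENNReal.ofReal
          (π ^ ((finrank ℝ V : ℝ) / 2) * Gamma (s - finrank ℝ V / 2) / Gamma s) := by
  set n : ℝ := (finrank ℝ V : ℝ) with hn
  have hs0 : 0 < s := lt_of_le_of_lt (by positivity) hs
  have hsn : 0 < s - n / 2 := by linarith
  have hGamma : ∀ x : V, ENNReal.ofReal ((1 + ‖x‖ ^ 2) ^ (-s)) * ENNReal.ofReal (Gamma s)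
      = ∫⁻ t in Ioi (0 : ℝ),
          ENNReal.ofReal (t ^ (s - 1) * rexp (-((1 + ‖x‖ ^ 2) * t))) := by
    intro x
    have hr : 0 < 1 + ‖x‖ ^ 2 := by positivity
    rw [lintegral_rpow_mul_exp_neg_mul_Ioi hs0 hr, one_div, inv_rpow hr.le, ← rpow_neg hr.le,
      ENNReal.ofReal_mul (by positivity)]
  have hGauss : ∀ t ∈ Ioi (0 : ℝ),
      ∫⁻ x : V, ENNReal.ofReal (t ^ (s - 1) * rexp (-((1 + ‖x‖ ^ 2) * t)))
        = ENNReal.ofReal (π ^ (n / 2))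
          * ENNReal.ofReal (t ^ (s - n / 2 - 1) * rexp (-(1 * t))) := by
    intro t (ht : 0 < t)
    have hsplit : ∀ x : V, t ^ (s - 1) * rexp (-((1 + ‖x‖ ^ 2) * t))
        = t ^ (s - 1) * rexp (-t) * rexp (-(t * ‖x‖ ^ 2)) := by
      intro x
      rw [mul_assoc, ← exp_add]
      ring_nf
    simp_rw [hsplit, ENNReal.ofReal_mul (by positivity : 0 ≤ t ^ (s - 1) * rexp (-t))]
    rw [lintegral_const_mul' _ _ ENNReal.ofReal_ne_top, lintegral_exp_neg_mul_norm_sq ht, ← hn,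
      ← ENNReal.ofReal_mul (by positivity), ← ENNReal.ofReal_mul (by positivity),
      div_rpow pi_pos.le ht.le, show s - n / 2 - 1 = s - 1 + -(n / 2) by ring, rpow_add ht,
      rpow_neg ht.le, one_mul]
    congr 1
    ring
  have hmain : (∫⁻ x : V, ENNReal.ofReal ((1 + ‖x‖ ^ 2) ^ (-s))) * ENNReal.ofReal (Gamma s)
      = ENNReal.ofReal (π ^ (n / 2) * Gamma (s - n / 2)) := by
    rw [← lintegral_mul_const' _ _ ENNReal.ofReal_ne_top, lintegral_congr hGamma,
      lintegral_lintegral_swap (by fun_prop), setLIntegral_congr_fun measurableSet_Ioi hGauss,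
      lintegral_const_mul' _ _ ENNReal.ofReal_ne_top,
      lintegral_rpow_mul_exp_neg_mul_Ioi hsn one_pos, div_one, one_rpow, one_mul,
      ← ENNReal.ofReal_mul (by positivity)]
  rw [ENNReal.ofReal_div_of_pos (Gamma_pos_of_pos hs0),
    ENNReal.eq_div_iff (by simpa using Gamma_pos_of_pos hs0) ENNReal.ofReal_ne_top, mul_comm,
    hmain]

lemma integrable_one_add_norm_sq_rpow_neg {s : ℝ} (hs : (finrank ℝ V : ℝ) / 2 < s) :
    Integrable fun x : V => (1 + ‖x‖ ^ 2) ^ (-s) := by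
  simpa [neg_div] using integrable_rpow_neg_one_add_norm_sq (E := V) (μ := volume)
    (r := 2 * s) (by linarith)

lemma integral_one_add_norm_sq_rpow_neg {s : ℝ} (hs : (finrank ℝ V : ℝ) / 2 < s) :
    ∫ x : V, (1 + ‖x‖ ^ 2) ^ (-s)
      = π ^ ((finrank ℝ V : ℝ) / 2) * Gamma (s - finrank ℝ V / 2) / Gamma s := by
  have hsn : 0 < s - finrank ℝ V / 2 := by linarith
  have hs0 : 0 < s := lt_of_le_of_lt (by positivity) hs
  rw [integral_eq_lintegral_of_nonneg_ae (.of_forall fun x => by positivity)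
      (integrable_one_add_norm_sq_rpow_neg hs).aestronglyMeasurable,
    lintegral_one_add_norm_sq_rpow_neg hs, ENNReal.toReal_ofReal (by positivity)]

lemma integral_one_add_norm_sq_rpow_neg_add_one {s : ℝ} (hs : (finrank ℝ V : ℝ) / 2 < s) :
    ∫ x : V, (1 + ‖x‖ ^ 2) ^ (-(s + 1))
      = (s - finrank ℝ V / 2) / s * ∫ x : V, (1 + ‖x‖ ^ 2) ^ (-s) := by
  have hsn : 0 < s - finrank ℝ V / 2 := by linarith
  have hs0 : 0 < s := lt_of_le_of_lt (by positivity) hs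
  rw [integral_one_add_norm_sq_rpow_neg hs, integral_one_add_norm_sq_rpow_neg (by linarith),
    add_sub_right_comm, Gamma_add_one hsn.ne', Gamma_add_one hs0.ne']
  field_simp

lemma integral_one_add_norm_sq_rpow_neg_finrank_add_one (hV : 0 < finrank ℝ V) :
    ∫ x : V, (1 + ‖x‖ ^ 2) ^ (-((finrank ℝ V : ℝ) + 1))
      = (∫ x : V, (1 + ‖x‖ ^ 2) ^ (-(finrank ℝ V : ℝ))) / 2 := by
  have hn0 : (0 : ℝ) < finrank ℝ V := by exact_mod_cast hV
  rw [integral_one_add_norm_sq_rpow_neg_add_one (by linarith), sub_half]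
  field_simp

-- The integrand `(1 + ‖x‖²)^(-n)` is `2^(-n)` times the Jacobian of the inverse stereographic
-- projection `ℝⁿ → Sⁿ`.
lemma integral_one_add_norm_sq_rpow_neg_finrank (hV : 0 < finrank ℝ V) :
    ∫ x : V, (1 + ‖x‖ ^ 2) ^ (-(finrank ℝ V : ℝ))
      = 2 * π ^ (((finrank ℝ V : ℝ) + 1) / 2) / Gamma (((finrank ℝ V : ℝ) + 1) / 2)
          * 2 ^ (-(finrank ℝ V : ℝ)) := by
  set n : ℝ := (finrank ℝ V : ℝ) with hn
  have hn0 : 0 < n := by positivity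
  have hduplication := Gamma_mul_Gamma_add_half (n / 2)
  rw [mul_div_cancel₀ n two_ne_zero, sub_eq_add_neg, rpow_add two_pos, rpow_one,
    sqrt_eq_rpow] at hduplication
  have hΓ : 0 < Gamma (n / 2 + 1 / 2) := Gamma_pos_of_pos (by positivity)
  rw [integral_one_add_norm_sq_rpow_neg (by linarith), ← hn, sub_half,
    show (n + 1) / 2 = n / 2 + 1 / 2 by ring, rpow_add pi_pos, div_mul_eq_mul_div,
    div_eq_div_iff (Gamma_pos_of_pos hn0).ne' hΓ.ne']
  linear_combination π ^ (n / 2) * hduplication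

lemma toReal_eLpNorm_one_add_norm_sq_rpow_neg_rpow {a q : ℝ} (hq : 0 < q)
    (h : (finrank ℝ V : ℝ) / 2 < a * q) :
    (eLpNorm (fun x : V => (1 + ‖x‖ ^ 2) ^ (-a)) (ENNReal.ofReal q) volume).toReal ^ q
      = ∫ x : V, (1 + ‖x‖ ^ 2) ^ (-(a * q)) := by
  have hpow : ∀ x : V, ‖(1 + ‖x‖ ^ 2) ^ (-a)‖ ^ q = (1 + ‖x‖ ^ 2) ^ (-(a * q)) := by
    intro x
    rw [norm_of_nonneg (by positivity), ← rpow_mul (by positivity), neg_mul]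
  rw [toReal_eLpNorm_ofReal_rpow hq (Measurable.aestronglyMeasurable (by fun_prop))
      (by simpa only [hpow] using integrable_one_add_norm_sq_rpow_neg h)]
  simp only [hpow]

lemma toReal_eLpNorm_fderiv_one_add_norm_sq_rpow_neg_sq {a : ℝ}
    (h : (finrank ℝ V : ℝ) / 2 < 2 * a + 1) :
    (eLpNorm (fun x => ‖fderiv ℝ (fun x : V => (1 + ‖x‖ ^ 2) ^ (-a)) x‖) 2 volume).toReal ^ 2
      = 4 * a ^ 2 * ((∫ x : V, (1 + ‖x‖ ^ 2) ^ (-(2 * a + 1)))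
          - ∫ x : V, (1 + ‖x‖ ^ 2) ^ (-(2 * a + 1 + 1))) := by
  have hsq : ∀ x : V, ‖‖fderiv ℝ (fun x : V => (1 + ‖x‖ ^ 2) ^ (-a)) x‖‖ ^ (2 : ℝ)
      = 4 * a ^ 2
        * ((1 + ‖x‖ ^ 2) ^ (-(2 * a + 1)) - (1 + ‖x‖ ^ 2) ^ (-(2 * a + 1 + 1))) := by
    intro x
    have hr : 0 < 1 + ‖x‖ ^ 2 := by positivity
    rw [norm_norm, norm_fderiv_one_add_norm_sq_rpow, rpow_two, mul_pow, mul_pow, mul_pow, sq_abs,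
      ← rpow_natCast ((1 + ‖x‖ ^ 2) ^ (-a - 1)) 2, ← rpow_mul hr.le,
      show -(2 * a + 1) = -(2 * a + 1 + 1) + 1 by ring, rpow_add_one hr.ne']
    push_cast
    ring_nf
  have hint : Integrable fun x : V =>
      4 * a ^ 2 * ((1 + ‖x‖ ^ 2) ^ (-(2 * a + 1)) - (1 + ‖x‖ ^ 2) ^ (-(2 * a + 1 + 1))) :=
    ((integrable_one_add_norm_sq_rpow_neg h).sub
      (integrable_one_add_norm_sq_rpow_neg (by linarith))).const_mul _
  have key := toReal_eLpNorm_ofReal_rpow two_pos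
    (measurable_fderiv ℝ (fun x : V => (1 + ‖x‖ ^ 2) ^ (-a))).norm.aestronglyMeasurable
    (by simpa only [hsq] using hint)
  rw [ENNReal.ofReal_ofNat, rpow_two] at key
  rw [key, integral_congr_ae (.of_forall hsq), integral_const_mul,
    integral_sub (integrable_one_add_norm_sq_rpow_neg h)
      (integrable_one_add_norm_sq_rpow_neg (by linarith))]

end

/-- **Equality in the `p = (d+1)/(d-1)` GNS inequality at `g₀(x) = (1+|x|²)^{-(d-1)/2}`**:
`C_S (d(d-2)/(d-1)²) ‖∇g₀‖₂² ‖g₀‖_{2d/(d-1)}^{4/(d-1)} = ‖g₀‖_{2(d+1)/(d-1)}^{2(d+1)/(d-1)}`. -/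
theorem stmt11 (d : ℕ) (hd : 3 ≤ d)
    (g₀ : E d → ℝ) (hg₀ : ∀ x : E d, g₀ x = (1 + ‖x‖ ^ 2) ^ (-((d : ℝ) - 1) / 2)) :
    CS d * ((d : ℝ) * ((d : ℝ) - 2) / ((d : ℝ) - 1) ^ 2) *
        ((eLpNorm (fun x => ‖fderiv ℝ g₀ x‖) 2 volume).toReal) ^ 2 *
        ((eLpNorm g₀ (ENNReal.ofReal (2 * (d : ℝ) / ((d : ℝ) - 1))) volume).toReal) ^
          (4 / ((d : ℝ) - 1)) =
      ((eLpNorm g₀ (ENNReal.ofReal (2 * ((d : ℝ) + 1) / ((d : ℝ) - 1))) volume).toReal) ^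
        (2 * ((d : ℝ) + 1) / ((d : ℝ) - 1)) := by
  have hd3 : (3 : ℝ) ≤ d := by exact_mod_cast hd
  have hd1 : (0 : ℝ) < d - 1 := by linarith
  have hd2 : (d : ℝ) - 2 ≠ 0 := by linarith
  have hdim : (finrank ℝ (E d) : ℝ) = d := by simp
  have hdpos : 0 < finrank ℝ (E d) := by simp; omega
  rw [CS]
  set S := 2 * π ^ (((d : ℝ) + 1) / 2) / Gamma (((d : ℝ) + 1) / 2)
  set K := ∫ x : E d, (1 + ‖x‖ ^ 2) ^ (-(d : ℝ)) with hK
  have hKS : K ^ (2 / (d : ℝ)) = S ^ (2 / (d : ℝ)) / 4 := by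
    have h := integral_one_add_norm_sq_rpow_neg_finrank (V := E d) hdpos
    rw [hdim, ← hK] at h
    rw [h, mul_rpow (by positivity) (by positivity), ← rpow_mul zero_le_two,
      show -(d : ℝ) * (2 / d) = ((-2 : ℤ) : ℝ) by push_cast; field_simp, rpow_intCast]
    ring
  have hK1 : ∫ x : E d, (1 + ‖x‖ ^ 2) ^ (-((d : ℝ) + 1)) = K / 2 := by
    simpa only [hdim] using integral_one_add_norm_sq_rpow_neg_finrank_add_one (V := E d) hdpos
  have hq : ((d : ℝ) - 1) / 2 * (2 * d / (d - 1)) = d := by field_simp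
  have hq1 : ((d : ℝ) - 1) / 2 * (2 * (d + 1) / (d - 1)) = d + 1 := by field_simp
  obtain rfl : g₀ = fun x => (1 + ‖x‖ ^ 2) ^ (-(((d : ℝ) - 1) / 2)) :=
    funext fun x => by rw [hg₀, neg_div]
  rw [show 4 / ((d : ℝ) - 1) = 2 * d / (d - 1) * (2 / d) by field_simp; ring,
    rpow_mul ENNReal.toReal_nonneg,
    toReal_eLpNorm_fderiv_one_add_norm_sq_rpow_neg_sq (by rw [hdim]; linarith),
    toReal_eLpNorm_one_add_norm_sq_rpow_neg_rpow (by positivity) (by rw [hdim, hq]; linarith),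
    toReal_eLpNorm_one_add_norm_sq_rpow_neg_rpow (by positivity) (by rw [hdim, hq1]; linarith),
    hq, hq1, show 2 * (((d : ℝ) - 1) / 2) + 1 = d by ring, hK1, ← hK, hKS]
  calc _ = S ^ (-2 / (d : ℝ)) * S ^ (2 / (d : ℝ)) * (K / 2) := by field_simp; ring
    _ = K / 2 := by rw [← rpow_add (by positivity), neg_div, neg_add_cancel, rpow_zero, one_mul]
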